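/- arXiv:2507.16417 — 8 statements merged into one kernel-verified Lean document; each statement's English description precedes it below -/
import Mathlib

section
/- Let K ≥ 2 and let r₁ ≥ r₂ ≥ ⋯ ≥ r_K > 0 be real numbers. Define the sequence s_j = arsinh(sinh r₁ ∏_{k=2}^{j+1} cosh r_k) for j = 1, …, K-1, so that sinh s_j = sinh s_{j-1} · cosh r_{j+1} for j = 2, …, K-1. Then the final value r = s_{K-1} satisfies sinh r = sinh r₁ · ∏_{k=2}^{K} cosh r_k, and equivalently, setting χ_k = tanh r_k and χ = tanh r, one has χ = χ₁ / √(χ₁² + ∏_{k=1}^{K}(1-χ_k²)). -/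
/-- Iterating the binary parallel (concentration) rule `sinh c = sinh a · cosh b`
`K - 1` times on a decreasingly ordered positive list `r 0 ≥ r 1 ≥ ⋯ ≥ r (K-1) > 0`
(starting from `s 0 = r 0` and `sinh (s (j+1)) = sinh (s j) · cosh (r (j+1))`)
yields a final squeezing parameter `s (K-1)` with
`sinh (s (K-1)) = sinh (r 0) · ∏_{k=1}^{K-1} cosh (r k)`, and equivalently, in terms
of the ratio negativities `χ k = tanh (r k)`,
`tanh (s (K-1)) = χ 0 / √((χ 0)² + ∏_{k=0}^{K-1} (1 - (χ k)²))`. -/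
theorem stmt_1 (K : ℕ) (hK : 2 ≤ K) (r : ℕ → ℝ)
    (hpos : ∀ k, k < K → 0 < r k)
    (hmono : ∀ i j, i ≤ j → j < K → r j ≤ r i)
    (s : ℕ → ℝ)
    (hs0 : s 0 = r 0)
    (hs : ∀ j, s (j + 1) = Real.arsinh (Real.sinh (s j) * Real.cosh (r (j + 1)))) :
    Real.sinh (s (K - 1)) =
        Real.sinh (r 0) * ∏ k ∈ Finset.Ico 1 K, Real.cosh (r k) ∧
      Real.tanh (s (K - 1)) =
        Real.tanh (r 0) /
          Real.sqrt ((Real.tanh (r 0)) ^ 2 +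
            ∏ k ∈ Finset.range K, (1 - (Real.tanh (r k)) ^ 2)) := by
  have key : ∀ j, Real.sinh (s j) =
      Real.sinh (r 0) * ∏ k ∈ Finset.Ico 1 (j + 1), Real.cosh (r k) := by
    intro j
    induction j with
    | zero => simp [hs0]
    | succ j ih =>
      rw [hs j, Real.sinh_arsinh, ih,
        Finset.prod_Ico_succ_top (by omega : 1 ≤ j + 1)]
      ring
  have hK1 : K - 1 + 1 = K := by omega
  have h1 : Real.sinh (s (K - 1)) =
      Real.sinh (r 0) * ∏ k ∈ Finset.Ico 1 K, Real.cosh (r k) := by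
    rw [key (K - 1), hK1]
  refine ⟨h1, ?_⟩
  set Q : ℝ := ∏ k ∈ Finset.Ico 1 K, Real.cosh (r k) with hQ
  have hQpos : 0 < Q := Finset.prod_pos fun k _ => Real.cosh_pos _
  have hc0 : (0:ℝ) < Real.cosh (r 0) := Real.cosh_pos _
  have hcs : (0:ℝ) < Real.cosh (s (K - 1)) := Real.cosh_pos _
  -- product of (1 - tanh^2) = 1 / (cosh r0 * Q)^2
  have hP : ∏ k ∈ Finset.range K, (1 - (Real.tanh (r k)) ^ 2)
      = 1 / (Real.cosh (r 0) * Q) ^ 2 := by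
    have h1t : ∀ x : ℝ, 1 - Real.tanh x ^ 2 = 1 / Real.cosh x ^ 2 := by
      intro x
      have h := Real.cosh_sq_sub_sinh_sq x
      have hc : Real.cosh x ≠ 0 := (Real.cosh_pos x).ne'
      rw [Real.tanh_eq_sinh_div_cosh]
      field_simp
      exact h
    calc ∏ k ∈ Finset.range K, (1 - (Real.tanh (r k)) ^ 2)
        = ∏ k ∈ Finset.range K, (1 / Real.cosh (r k) ^ 2) := by
          exact Finset.prod_congr rfl fun k _ => h1t (r k)
      _ = 1 / (∏ k ∈ Finset.range K, Real.cosh (r k)) ^ 2 := by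
          rw [← Finset.prod_pow]
          simp [Finset.prod_div_distrib]
      _ = 1 / (Real.cosh (r 0) * Q) ^ 2 := by
          congr 2
          rw [Finset.range_eq_Ico, Finset.prod_eq_prod_Ico_succ_bot (by omega : 0 < K)]
  rw [hP]
  -- inside sqrt equals (cosh (s (K-1)) / (cosh r0 * Q))^2
  have hS : Real.sinh (s (K - 1)) = Real.sinh (r 0) * Q := h1
  have hcosh_sq : Real.cosh (s (K - 1)) ^ 2 = Real.sinh (s (K - 1)) ^ 2 + 1 :=
    Real.cosh_sq (s (K - 1))
  have hin : (Real.tanh (r 0)) ^ 2 + 1 / (Real.cosh (r 0) * Q) ^ 2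
      = (Real.cosh (s (K - 1)) / (Real.cosh (r 0) * Q)) ^ 2 := by
    have hcs2 : Real.cosh (s (K - 1)) ^ 2 = Real.sinh (r 0) ^ 2 * Q ^ 2 + 1 := by
      rw [hcosh_sq, hS]; ring
    rw [Real.tanh_eq_sinh_div_cosh]
    have h0 := Real.cosh_sq_sub_sinh_sq (r 0)
    field_simp
    linear_combination (-1) * hcs2
  rw [hin, Real.sqrt_sq (by positivity)]
  rw [Real.tanh_eq_sinh_div_cosh, Real.tanh_eq_sinh_div_cosh]
  field_simp
  linear_combination hS
end

section
/- Let K ≥ 2 and r : {1,…,K} → (0,∞), and let σ be any permutation of {1,…,K}. Define the sequence s₁ = r_{σ(1)} and, for j = 2, …, K, sinh s_j = max( sinh s_{j-1} · cosh r_{σ(j)} , cosh s_{j-1} · sinh r_{σ(j)} ). Then sinh s_K ≤ tanh( max_{1≤k≤K} r_k ) · ∏_{k=1}^{K} cosh r_k, and equality holds whenever the maximal value max_k r_k equals r_{σ(1)} (i.e., the largest squeezing parameter is among the first modes to be concentrated). -/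
/-!
Track the pair `(cosh s, sinh s)` along the concentration. One step
`sinh c = max (sinh a cosh b) (cosh a sinh b)` never lets `cosh` grow by more than the factor
`cosh b`, so `cosh s_j ≤ P_j := ∏_{i ≤ j} cosh r_{σ i}`; and since
`cosh a sinh b = cosh a · tanh b · cosh b`, the bound `sinh s_j ≤ tanh M · P_j` with
`M = max_k r_k` propagates as well. If the largest parameter comes first the bound holds with
equality at `j = 0`, and then the first branch of the maximum already attains it at every step.
-/

open Real Finset

namespace Real

theorem tanh_le_tanh {x y : ℝ} (h : x ≤ y) : tanh x ≤ tanh y := by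
  rwa [← artanh_le_artanh_iff ⟨neg_one_lt_tanh x, tanh_lt_one x⟩
    ⟨neg_one_lt_tanh y, tanh_lt_one y⟩, artanh_tanh, artanh_tanh]

theorem tanh_mul_cosh (x : ℝ) : tanh x * cosh x = sinh x := by
  rw [tanh_eq_sinh_div_cosh, div_mul_cancel₀ _ (cosh_pos x).ne']

theorem sinh_le_mul_cosh_of_tanh_le {x T : ℝ} (h : tanh x ≤ T) : sinh x ≤ T * cosh x := by
  rw [← tanh_mul_cosh]
  exact mul_le_mul_of_nonneg_right h (cosh_pos x).le

end Real

section Concentration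

variable {a b c : ℝ}

theorem cosh_le_cosh_mul_cosh_of_sinh_eq_max
    (h : sinh c = max (sinh a * cosh b) (cosh a * sinh b)) : cosh c ≤ cosh a * cosh b := by
  have hsq : cosh c ^ 2 ≤ (cosh a * cosh b) ^ 2 := by
    rw [cosh_sq, h]
    rcases max_choice (sinh a * cosh b) (cosh a * sinh b) with hmax | hmax <;> rw [hmax]
    · nlinarith [cosh_sq_sub_sinh_sq a, one_le_cosh b, sq_nonneg (cosh b)]
    · nlinarith [cosh_sq_sub_sinh_sq b, one_le_cosh a, sq_nonneg (cosh a)]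
  exact (pow_le_pow_iff_left₀ (cosh_pos c).le (by positivity) two_ne_zero).mp hsq

theorem sinh_le_of_sinh_eq_max {T P : ℝ} (hT : 0 ≤ T) (hb : tanh b ≤ T) (hca : cosh a ≤ P)
    (hsa : sinh a ≤ T * P) (h : sinh c = max (sinh a * cosh b) (cosh a * sinh b)) :
    sinh c ≤ T * (P * cosh b) := by
  rw [h, ← mul_assoc]
  refine max_le (mul_le_mul_of_nonneg_right hsa (cosh_pos b).le) ?_
  calc cosh a * sinh b ≤ cosh a * (T * cosh b) :=
        mul_le_mul_of_nonneg_left (sinh_le_mul_cosh_of_tanh_le hb) (cosh_pos a).le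
    _ ≤ P * (T * cosh b) := mul_le_mul_of_nonneg_right hca (by positivity)
    _ = T * P * cosh b := by ring

variable {t s : ℕ → ℝ} {T : ℝ} {n : ℕ}

theorem cosh_le_prod_and_sinh_le_mul_prod (hT : 0 ≤ T) (ht : ∀ i ≤ n, tanh (t i) ≤ T)
    (hs0 : s 0 = t 0)
    (hs : ∀ j < n, sinh (s (j + 1)) = max (sinh (s j) * cosh (t (j + 1)))
      (cosh (s j) * sinh (t (j + 1)))) :
    cosh (s n) ≤ ∏ i ∈ range (n + 1), cosh (t i) ∧
      sinh (s n) ≤ T * ∏ i ∈ range (n + 1), cosh (t i) := by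
  induction n with
  | zero =>
    simp only [zero_add, range_one, prod_singleton, hs0, le_refl, true_and]
    exact sinh_le_mul_cosh_of_tanh_le (ht 0 le_rfl)
  | succ n ih =>
    obtain ⟨hcosh, hsinh⟩ :=
      ih (fun i hi ↦ ht i (by omega)) (fun j hj ↦ hs j (by omega))
    have hstep := hs n (by omega)
    rw [prod_range_succ]
    exact ⟨(cosh_le_cosh_mul_cosh_of_sinh_eq_max hstep).trans
        (mul_le_mul_of_nonneg_right hcosh (cosh_pos _).le),
      sinh_le_of_sinh_eq_max hT (ht _ le_rfl) hcosh hsinh hstep⟩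

theorem sinh_eq_mul_prod_of_tanh_eq (hT : 0 ≤ T) (ht : ∀ i ≤ n, tanh (t i) ≤ T)
    (ht0 : tanh (t 0) = T) (hs0 : s 0 = t 0)
    (hs : ∀ j < n, sinh (s (j + 1)) = max (sinh (s j) * cosh (t (j + 1)))
      (cosh (s j) * sinh (t (j + 1)))) :
    sinh (s n) = T * ∏ i ∈ range (n + 1), cosh (t i) := by
  induction n with
  | zero => simp only [zero_add, range_one, prod_singleton, hs0, ← ht0, tanh_mul_cosh]
  | succ n ih =>
    have hupper := (cosh_le_prod_and_sinh_le_mul_prod hT ht hs0 hs).2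
    have hprev := ih (fun i hi ↦ ht i (by omega)) (fun j hj ↦ hs j (by omega))
    refine hupper.antisymm ?_
    rw [hs n (by omega), prod_range_succ, ← mul_assoc, ← hprev]
    exact le_max_left _ _

end Concentration

/-- Iterated pairwise entanglement concentration of `K` two-mode squeezed vacuum states
with positive squeezing parameters `r 0, …, r (K-1)`, performed in the order given by a
permutation `σ` (combining the accumulated value `s j` with the next mode via
`sinh (s (j+1)) = max (sinh (s j) cosh (r (σ (j+1)))) (cosh (s j) sinh (r (σ (j+1))))`),
always satisfies `sinh (s (K-1)) ≤ tanh (max_k r k) · ∏_k cosh (r k)`, with equality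
whenever the largest squeezing parameter comes first, i.e. `r (σ 0) = max_k r k`. -/
theorem stmt_3 (K : ℕ) (hK : 2 ≤ K) (r : Fin K → ℝ) (hr : ∀ k, 0 < r k)
    (σ : Equiv.Perm (Fin K)) (s : ℕ → ℝ)
    (hs0 : s 0 = r (σ ⟨0, by omega⟩))
    (hs : ∀ j : ℕ, (h : j + 1 < K) →
      Real.sinh (s (j + 1)) =
        max (Real.sinh (s j) * Real.cosh (r (σ ⟨j + 1, h⟩)))
            (Real.cosh (s j) * Real.sinh (r (σ ⟨j + 1, h⟩)))) :
    Real.sinh (s (K - 1)) ≤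
        Real.tanh (Finset.univ.sup' (Finset.univ_nonempty_iff.mpr ⟨⟨0, by omega⟩⟩) r) *
          ∏ k, Real.cosh (r k) ∧
      (r (σ ⟨0, by omega⟩) =
          Finset.univ.sup' (Finset.univ_nonempty_iff.mpr ⟨⟨0, by omega⟩⟩) r →
        Real.sinh (s (K - 1)) =
          Real.tanh (Finset.univ.sup' (Finset.univ_nonempty_iff.mpr ⟨⟨0, by omega⟩⟩) r) *
            ∏ k, Real.cosh (r k)) := by
  set M := Finset.univ.sup' (Finset.univ_nonempty_iff.mpr ⟨⟨0, by omega⟩⟩) r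
  have hM : ∀ k, r k ≤ M := fun k ↦ le_sup' r (mem_univ k)
  have hT : 0 ≤ tanh M := tanh_zero ▸ tanh_le_tanh ((hr _).le.trans (hM (σ ⟨0, by omega⟩)))
  -- the concentration order as a sequence on ℕ; its values beyond `K - 1` are never used
  let t : ℕ → ℝ := fun i ↦ if h : i < K then r (σ ⟨i, h⟩) else 0
  have ht : ∀ i : Fin K, t i = r (σ i) := fun i ↦ dif_pos i.isLt
  have hs0' : s 0 = t 0 := hs0.trans (ht ⟨0, by omega⟩).symm
  have ht_le : ∀ i ≤ K - 1, tanh (t i) ≤ tanh M := fun i hi ↦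
    ht ⟨i, by omega⟩ ▸ tanh_le_tanh (hM _)
  have hs' : ∀ j < K - 1, sinh (s (j + 1)) = max (sinh (s j) * cosh (t (j + 1)))
      (cosh (s j) * sinh (t (j + 1))) := fun j hj ↦ by
    rw [hs j (by omega), ht ⟨j + 1, by omega⟩]
  have hprod : ∏ i ∈ range (K - 1 + 1), cosh (t i) = ∏ k, cosh (r k) := by
    rw [Nat.sub_add_cancel (by omega : 1 ≤ K), ← Fin.prod_univ_eq_prod_range]
    simp only [ht]
    exact Equiv.prod_comp σ (fun k ↦ cosh (r k))
  refine ⟨hprod ▸ (cosh_le_prod_and_sinh_le_mul_prod hT ht_le hs0' hs').2, fun hmax ↦ ?_⟩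
  rw [← hprod]
  exact sinh_eq_mul_prod_of_tanh_eq hT ht_le (by rw [ht ⟨0, by omega⟩, hmax]) hs0' hs'
end

section
/- Let 0 < η < 1 and 0 ≤ χ < 1, and set χ'² = ηχ² / (1 - (1-η)χ²). Then for every n ≥ 0, ∑_{j=n}^{∞} C(j,n) η^n (1-η)^{j-n} (1-χ²) χ^{2j} = (1-χ'²) χ'^{2n}. In other words, the matrix D^L with entries D^L_{n,j} = C(j,n) η^n (1-η)^{j-n} maps the geometric Schmidt-value vector λ(χ) = ((1-χ²)χ^{2j})_{j≥0} to the geometric Schmidt-value vector λ(χ'). -/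
/-- The pure-loss matrix `D^L` (entries `D^L_{n,j} = C(j,n) η^n (1-η)^{j-n}` for `j ≥ n`)
maps the geometric Schmidt-value vector `λ(χ) = ((1-χ²)χ^{2j})_j` of a two-mode squeezed
vacuum state to the geometric Schmidt-value vector `λ(χ')` where
`χ'² = ηχ² / (1 - (1-η)χ²)`: for every `n ≥ 0`,
`∑_{j=n}^{∞} C(j,n) η^n (1-η)^{j-n} (1-χ²) χ^{2j} = (1-χ'²) χ'^{2n}`. -/
theorem stmt_6 (η χ w : ℝ) (hη0 : 0 < η) (hη1 : η < 1) (hχ0 : 0 ≤ χ) (hχ1 : χ < 1)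
    (hw : w = η * χ ^ 2 / (1 - (1 - η) * χ ^ 2)) :
    ∀ n : ℕ, ∑' j : ℕ,
        (if n ≤ j then
            (j.choose n : ℝ) * η ^ n * (1 - η) ^ (j - n) * ((1 - χ ^ 2) * χ ^ (2 * j))
          else 0) = (1 - w) * w ^ n := by
  intro n
  set f : ℕ → ℝ := fun j =>
    (if n ≤ j then
        (j.choose n : ℝ) * η ^ n * (1 - η) ^ (j - n) * ((1 - χ ^ 2) * χ ^ (2 * j))
      else 0) with hf
  set r : ℝ := (1 - η) * χ ^ 2 with hr_def
  have hχ2 : χ ^ 2 < 1 := by nlinarith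
  have hχ2' : (0:ℝ) ≤ χ ^ 2 := sq_nonneg χ
  have hr0 : 0 ≤ r := mul_nonneg (by linarith) hχ2'
  have hr1 : r < 1 := by nlinarith
  have hrnorm : ‖r‖ < 1 := by rw [Real.norm_eq_abs, abs_of_nonneg hr0]; exact hr1
  have hd : (0:ℝ) < 1 - r := by linarith
  -- shift the sum
  have hinj : Function.Injective (fun k : ℕ => n + k) := fun a b h => by simpa using h
  have hsupp : Function.support f ⊆ Set.range (fun k : ℕ => n + k) := by
    intro j hj
    by_contra hcon
    apply hj
    have : ¬ n ≤ j := by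
      intro hle; exact hcon ⟨j - n, by simp; omega⟩
    simp [hf, this]
  have hshift : ∑' k : ℕ, f (n + k) = ∑' j : ℕ, f j := hinj.tsum_eq hsupp
  rw [← hshift]
  have hkey : ∀ k : ℕ, f (n + k) =
      (η ^ n * ((1 - χ ^ 2) * χ ^ (2 * n))) * (((k + n).choose n : ℝ) * r ^ k) := by
    intro k
    have h1 : n ≤ n + k := Nat.le_add_right n k
    have h2 : n + k - n = k := by omega
    have h3 : (n + k).choose n = (k + n).choose n := by rw [Nat.add_comm]
    simp only [hf, if_pos h1, h2, h3]
    have : χ ^ (2 * (n + k)) = χ ^ (2 * n) * χ ^ (2 * k) := by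
      rw [← pow_add]; ring_nf
    rw [this, hr_def, mul_pow, ← pow_mul]
    ring
  rw [tsum_congr hkey, tsum_mul_left,
    tsum_choose_mul_geometric_of_norm_lt_one n hrnorm, hw, hr_def]
  have hne : 1 - (1 - η) * χ ^ 2 ≠ 0 := by
    rw [hr_def] at hd; linarith
  rw [div_pow, one_sub_div hne]
  field_simp
  ring
end

section
/- Let r₀, r₁, r₂ ≥ 0 be real numbers. Define d = cosh(2r₁)cosh(2r₂) + 1 + cosh(2r₀)(cosh(2r₁) + cosh(2r₂)), a = [cosh(2r₀)(cosh(2r₁)cosh(2r₂)+1) + cosh(2r₁) + cosh(2r₂)]/d, and c = sinh(2r₀)sinh(2r₁)sinh(2r₂)/d. Then c² = a² - 1, and (a-1)/(a+1) = tanh²r₀ · tanh²r₁ · tanh²r₂; in particular √((a-1)/(a+1)) = tanh r₀ tanh r₁ tanh r₂. -/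
/-!
Write `xᵢ = cosh (2 rᵢ)`. The numerator `n` and the denominator `d` of `a` are multilinear in the
`xᵢ`, and `n - d = ∏ (xᵢ - 1)`, `n + d = ∏ (xᵢ + 1)`. Hence `a² - 1 = ∏ (xᵢ² - 1) / d²`, which is
`c²` because `sinh² (2 rᵢ) = xᵢ² - 1`, and `(a - 1)/(a + 1) = ∏ (xᵢ - 1)/(xᵢ + 1) = ∏ tanh² rᵢ`.
-/

section SwapAlgebra

variable {K : Type*} [Field K] {x₀ x₁ x₂ a d : K}

theorem sub_one_eq_prod_sub_one_div (hd : d = x₁ * x₂ + 1 + x₀ * (x₁ + x₂)) (hd0 : d ≠ 0)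
    (ha : a = (x₀ * (x₁ * x₂ + 1) + x₁ + x₂) / d) :
    a - 1 = (x₀ - 1) * (x₁ - 1) * (x₂ - 1) / d := by
  rw [ha, div_sub_one hd0, hd]
  ring

theorem add_one_eq_prod_add_one_div (hd : d = x₁ * x₂ + 1 + x₀ * (x₁ + x₂)) (hd0 : d ≠ 0)
    (ha : a = (x₀ * (x₁ * x₂ + 1) + x₁ + x₂) / d) :
    a + 1 = (x₀ + 1) * (x₁ + 1) * (x₂ + 1) / d := by
  rw [ha, div_add_one hd0, hd]
  ring

theorem sub_one_div_add_one_eq_prod (hd : d = x₁ * x₂ + 1 + x₀ * (x₁ + x₂)) (hd0 : d ≠ 0)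
    (ha : a = (x₀ * (x₁ * x₂ + 1) + x₁ + x₂) / d) :
    (a - 1) / (a + 1) = (x₀ - 1) / (x₀ + 1) * ((x₁ - 1) / (x₁ + 1)) * ((x₂ - 1) / (x₂ + 1)) := by
  rw [sub_one_eq_prod_sub_one_div hd hd0 ha, add_one_eq_prod_add_one_div hd hd0 ha,
    div_div_div_cancel_right₀ hd0, div_mul_div_comm, div_mul_div_comm]

theorem sq_eq_sq_sub_one_of_sq_eq {y₀ y₁ y₂ c : K} (hy₀ : y₀ ^ 2 = x₀ ^ 2 - 1)
    (hy₁ : y₁ ^ 2 = x₁ ^ 2 - 1) (hy₂ : y₂ ^ 2 = x₂ ^ 2 - 1)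
    (hd : d = x₁ * x₂ + 1 + x₀ * (x₁ + x₂)) (hd0 : d ≠ 0)
    (ha : a = (x₀ * (x₁ * x₂ + 1) + x₁ + x₂) / d) (hc : c = y₀ * y₁ * y₂ / d) :
    c ^ 2 = a ^ 2 - 1 :=
  calc c ^ 2 = y₀ ^ 2 * y₁ ^ 2 * y₂ ^ 2 / d ^ 2 := by rw [hc]; ring
    _ = (x₀ - 1) * (x₁ - 1) * (x₂ - 1) / d * ((x₀ + 1) * (x₁ + 1) * (x₂ + 1) / d) := by
      rw [hy₀, hy₁, hy₂]; ring
    _ = a ^ 2 - 1 := by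
      rw [← sub_one_eq_prod_sub_one_div hd hd0 ha, ← add_one_eq_prod_add_one_div hd hd0 ha]
      ring

end SwapAlgebra

namespace Real

theorem tanh_nonneg {x : ℝ} (hx : 0 ≤ x) : 0 ≤ tanh x := by
  rw [tanh_eq_sinh_div_cosh]
  exact div_nonneg (sinh_nonneg_iff.mpr hx) (cosh_pos x).le

theorem tanh_sq_eq_cosh_two_mul (x : ℝ) :
    tanh x ^ 2 = (cosh (2 * x) - 1) / (cosh (2 * x) + 1) := by
  rw [tanh_eq_sinh_div_cosh, div_pow, cosh_two_mul, cosh_sq,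
    div_eq_div_iff (by positivity) (by positivity)]
  ring

theorem sinh_two_mul_sq (x : ℝ) : sinh (2 * x) ^ 2 = cosh (2 * x) ^ 2 - 1 := by
  rw [cosh_sq]
  ring

end Real

/-- Covariance-matrix entries of the post-measurement state in general continuous-variable
entanglement swapping with a GPOVM whose seed is a two-mode squeezed vacuum state of
squeezing `r₀`, applied to two squeezed vacuum states with squeezing `r₁`, `r₂`:
with `d`, `a`, `c` as below, one has `c² = a² - 1` and
`(a-1)/(a+1) = tanh²r₀ · tanh²r₁ · tanh²r₂`; in particular
`√((a-1)/(a+1)) = tanh r₀ · tanh r₁ · tanh r₂`. -/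
theorem stmt_8 (r₀ r₁ r₂ d a c : ℝ) (h0 : 0 ≤ r₀) (h1 : 0 ≤ r₁) (h2 : 0 ≤ r₂)
    (hd : d = Real.cosh (2 * r₁) * Real.cosh (2 * r₂) + 1 +
      Real.cosh (2 * r₀) * (Real.cosh (2 * r₁) + Real.cosh (2 * r₂)))
    (ha : a = (Real.cosh (2 * r₀) * (Real.cosh (2 * r₁) * Real.cosh (2 * r₂) + 1) +
      Real.cosh (2 * r₁) + Real.cosh (2 * r₂)) / d)
    (hc : c = Real.sinh (2 * r₀) * Real.sinh (2 * r₁) * Real.sinh (2 * r₂) / d) :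
    c ^ 2 = a ^ 2 - 1 ∧
      (a - 1) / (a + 1) =
        (Real.tanh r₀) ^ 2 * (Real.tanh r₁) ^ 2 * (Real.tanh r₂) ^ 2 ∧
      Real.sqrt ((a - 1) / (a + 1)) = Real.tanh r₀ * Real.tanh r₁ * Real.tanh r₂ := by
  have hd0 : d ≠ 0 := by rw [hd]; positivity
  have hratio : (a - 1) / (a + 1) = Real.tanh r₀ ^ 2 * Real.tanh r₁ ^ 2 * Real.tanh r₂ ^ 2 := by
    simp only [sub_one_div_add_one_eq_prod hd hd0 ha, Real.tanh_sq_eq_cosh_two_mul]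
  refine ⟨sq_eq_sq_sub_one_of_sq_eq (Real.sinh_two_mul_sq r₀) (Real.sinh_two_mul_sq r₁)
    (Real.sinh_two_mul_sq r₂) hd hd0 ha hc, hratio, ?_⟩
  have htanh : 0 ≤ Real.tanh r₀ * Real.tanh r₁ * Real.tanh r₂ := by
    have := Real.tanh_nonneg h0
    have := Real.tanh_nonneg h1
    have := Real.tanh_nonneg h2
    positivity
  rw [hratio, ← mul_pow, ← mul_pow, Real.sqrt_sq htanh]
end

section
/- Let k ≥ 3 be an integer and define φ(u) = u + (1-u)^{k-1} for u ∈ [0,1]. Then φ attains its minimum on [0,1] at the unique point u⁺ = 1 - (k-1)^{-1/(k-2)}, and the minimum value is φ(u⁺) = 1 - (k-2)(k-1)^{-(k-1)/(k-2)}. Consequently, the critical threshold of negativity percolation on the Bethe lattice of degree k is χ_th = √(1 - (k-2)(k-1)^{-(k-1)/(k-2)}). -/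
/-- For an integer `k ≥ 3`, the function `φ(u) = u + (1-u)^{k-1}` attains its minimum on
`[0,1]` at the unique point `u⁺ = 1 - (k-1)^{-1/(k-2)}`, with minimum value
`φ(u⁺) = 1 - (k-2)·(k-1)^{-(k-1)/(k-2)}` (whose square root is the critical threshold
`χ_th` of negativity percolation on the Bethe lattice of degree `k`). -/
theorem stmt_9 (k : ℕ) (hk : 3 ≤ k)
    (φ : ℝ → ℝ) (hφ : ∀ u, φ u = u + (1 - u) ^ (k - 1))
    (uplus : ℝ) (hu : uplus = 1 - ((k : ℝ) - 1) ^ (-(1 : ℝ) / ((k : ℝ) - 2))) :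
    uplus ∈ Set.Icc (0 : ℝ) 1 ∧
      (∀ u ∈ Set.Icc (0 : ℝ) 1, φ uplus ≤ φ u) ∧
      (∀ u ∈ Set.Icc (0 : ℝ) 1, φ u = φ uplus → u = uplus) ∧
      φ uplus = 1 - ((k : ℝ) - 2) * ((k : ℝ) - 1) ^ (-((k : ℝ) - 1) / ((k : ℝ) - 2)) := by
  have hφ' : φ = fun u => u + (1 - u) ^ (k - 1) := funext hφ
  subst hφ'
  set K : ℝ := (k : ℝ) - 1 with hK
  have hk2 : (2:ℝ) ≤ K := by
    have : (3:ℝ) ≤ (k:ℝ) := by exact_mod_cast hk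
    simp [hK]; linarith
  have hK0 : (0:ℝ) < K := by linarith
  have hkm2 : ((k:ℝ) - 2) = ((k - 2 : ℕ) : ℝ) := by
    have : (2:ℕ) ≤ k := by omega
    push_cast [this]; ring
  have hkm2ne : ((k:ℝ) - 2) ≠ 0 := by
    have : (3:ℝ) ≤ (k:ℝ) := by exact_mod_cast hk
    linarith
  set c : ℝ := K ^ (-(1 : ℝ) / ((k : ℝ) - 2)) with hc
  have hc0 : 0 < c := Real.rpow_pos_of_pos hK0 _
  have hc1 : c < 1 := by
    apply Real.rpow_lt_one_of_one_lt_of_neg (by linarith)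
    have : (3:ℝ) ≤ (k:ℝ) := by exact_mod_cast hk
    apply div_neg_of_neg_of_pos <;> linarith
  -- key identity
  have hckey : c ^ (k - 2) = 1 / K := by
    rw [hc, ← Real.rpow_natCast (K ^ (-(1:ℝ)/((k:ℝ)-2))) (k-2),
        ← Real.rpow_mul (le_of_lt hK0)]
    rw [← hkm2]
    rw [show (-(1:ℝ)/((k:ℝ)-2)) * ((k:ℝ)-2) = -1 by field_simp]
    rw [Real.rpow_neg_one]
    exact (one_div K).symm
  have huc : 1 - uplus = c := by rw [hu]; ring
  -- membership
  have hmem : uplus ∈ Set.Icc (0:ℝ) 1 := by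
    constructor <;> [linarith [hc1, huc]; linarith [hc0, huc]]
  -- derivative
  have hd : ∀ x : ℝ, HasDerivAt (fun u : ℝ => u + (1 - u) ^ (k - 1))
      (1 - K * (1 - x) ^ (k - 2)) x := by
    intro x
    have h1 : HasDerivAt (fun u : ℝ => 1 - u) (-1) x := (hasDerivAt_id x).const_sub 1
    have h2 := h1.pow (k - 1)
    have h3 := (hasDerivAt_id x).add h2
    refine h3.congr_deriv ?_
    have e1 : k - 1 - 1 = k - 2 := by omega
    have e2 : ((k - 1 : ℕ) : ℝ) = K := by
      have : (1:ℕ) ≤ k := by omega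
      push_cast [this]; simp [hK]
    rw [e1, e2]; ring
  have hcont : Continuous (fun u : ℝ => u + (1 - u) ^ (k - 1)) := by continuity
  have hk2n : 1 ≤ k - 2 := by omega
  -- strict anti on [0, uplus]
  have hanti : StrictAntiOn (fun u : ℝ => u + (1 - u) ^ (k - 1)) (Set.Icc 0 uplus) := by
    apply strictAntiOn_of_deriv_neg (convex_Icc _ _) hcont.continuousOn
    intro x hx
    rw [interior_Icc] at hx
    rw [(hd x).deriv]
    have hcx : c < 1 - x := by linarith [hx.2, huc]
    have : c ^ (k-2) < (1-x) ^ (k-2) := by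
      apply pow_lt_pow_left₀ hcx (le_of_lt hc0) (by omega)
    rw [hckey] at this
    have : K * (1/K) < K * ((1-x)^(k-2)) := by
      exact mul_lt_mul_of_pos_left this hK0
    rw [mul_one_div_cancel (ne_of_gt hK0)] at this
    linarith
  -- strict mono on [uplus, 1]
  have hmono : StrictMonoOn (fun u : ℝ => u + (1 - u) ^ (k - 1)) (Set.Icc uplus 1) := by
    apply strictMonoOn_of_deriv_pos (convex_Icc _ _) hcont.continuousOn
    intro x hx
    rw [interior_Icc] at hx
    rw [(hd x).deriv]
    have hcx : 1 - x < c := by linarith [hx.1, huc]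
    have hx1 : (0:ℝ) ≤ 1 - x := by linarith [hx.2]
    have : (1-x) ^ (k-2) < c ^ (k-2) := by
      apply pow_lt_pow_left₀ hcx hx1 (by omega)
    rw [hckey] at this
    have : K * ((1-x)^(k-2)) < K * (1/K) := mul_lt_mul_of_pos_left this hK0
    rw [mul_one_div_cancel (ne_of_gt hK0)] at this
    linarith
  refine ⟨hmem, ?_, ?_, ?_⟩
  · intro u hu'
    rcases le_total u uplus with h | h
    · exact (hanti.antitoneOn ⟨hu'.1, h⟩ ⟨hmem.1, le_refl _⟩ h)
    · exact (hmono.monotoneOn ⟨le_refl _, hmem.2⟩ ⟨h, hu'.2⟩ h)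
  · intro u hu' heq
    by_contra hne
    rcases lt_or_gt_of_ne hne with h | h
    · have := hanti ⟨hu'.1, le_of_lt h⟩ ⟨hmem.1, le_refl _⟩ h
      simp only at this heq; linarith
    · have := hmono ⟨le_refl _, hmem.2⟩ ⟨le_of_lt h, hu'.2⟩ h
      simp only at this heq; linarith
  · -- value
    simp only
    rw [huc, hu]
    have hd' : ((k:ℝ)-1) ^ (-((k : ℝ) - 1) / ((k : ℝ) - 2)) = c / K := by
      rw [show -((k:ℝ)-1)/((k:ℝ)-2) = -(1:ℝ)/((k:ℝ)-2) + (-1 : ℝ) by field_simp; ring]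
      rw [Real.rpow_add hK0, Real.rpow_neg_one, hc]
      ring
    rw [hd']
    have hck1 : c ^ (k - 1) = (1/K) * c := by
      rw [show k - 1 = (k - 2) + 1 by omega, pow_succ, hckey]
    rw [hck1]
    field_simp
    ring
end

section
/- Let k ≥ 3 be an integer. For Y ∈ (0,1), define χ(Y) = √(Y² + (1-Y²)^{k-1}) and X(Y) = Y/√(Y² + (1-Y²)^k). Then lim_{Y→1⁻} (1 - X(Y)) / (1 - χ(Y))^k = 2^{k-1}; in particular 1 - X_SC ∼ (1-χ)^k as χ → 1⁻. -/
private noncomputable def fAux (k : ℕ) (Y : ℝ) : ℝ :=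
  (1 + Real.sqrt (Y ^ 2 + (1 - Y ^ 2) ^ (k - 1))) ^ k /
    (Real.sqrt (Y ^ 2 + (1 - Y ^ 2) ^ k) *
      (Real.sqrt (Y ^ 2 + (1 - Y ^ 2) ^ k) + Y) *
      (1 - (1 - Y ^ 2) ^ (k - 2)) ^ k)

/-- For an integer `k ≥ 3`, with `χ(Y) = √(Y² + (1-Y²)^{k-1})` and
`X(Y) = Y/√(Y² + (1-Y²)^k)` for `Y ∈ (0,1)`:
`lim_{Y→1⁻} (1 - X(Y)) / (1 - χ(Y))^k = 2^{k-1}`,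
i.e. `1 - X_SC ∼ (1-χ)^k` as `χ → 1⁻`. -/
theorem stmt_13 (k : ℕ) (hk : 3 ≤ k) :
    Filter.Tendsto (fun Y : ℝ =>
        (1 - Y / Real.sqrt (Y ^ 2 + (1 - Y ^ 2) ^ k)) /
          (1 - Real.sqrt (Y ^ 2 + (1 - Y ^ 2) ^ (k - 1))) ^ k)
      (nhdsWithin 1 (Set.Ioo 0 1)) (nhds ((2 : ℝ) ^ (k - 1))) := by
  have hk0 : k ≠ 0 := by omega
  have hk1 : k - 1 ≠ 0 := by omega
  have hk2 : k - 2 ≠ 0 := by omega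
  have hcont : ContinuousAt (fAux k) 1 := by
    apply ContinuousAt.div
    · fun_prop
    · fun_prop
    · norm_num [zero_pow, hk0, hk2]
  have hf1 : fAux k 1 = (2 : ℝ) ^ (k - 1) := by
    have h2k : (2 : ℝ) ^ k = 2 ^ (k - 1) * 2 := by
      rw [← pow_succ]; congr 1; omega
    simp [fAux, zero_pow, hk0, hk1, hk2]
    rw [show ((1:ℝ)+1) = 2 by norm_num, h2k]; ring
  have key : Filter.Tendsto (fAux k) (nhdsWithin 1 (Set.Ioo 0 1))
      (nhds ((2 : ℝ) ^ (k - 1))) := by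
    have := hcont.tendsto.mono_left (nhdsWithin_le_nhds (s := Set.Ioo 0 1))
    rwa [hf1] at this
  refine tendsto_nhdsWithin_congr (fun Y hY => ?_) key
  obtain ⟨hY0, hY1⟩ := hY
  unfold fAux
  set t := 1 - Y ^ 2 with ht
  have ht0 : 0 < t := by nlinarith
  have ht1 : t < 1 := by nlinarith
  set S := Real.sqrt (Y ^ 2 + t ^ k) with hS
  set C := Real.sqrt (Y ^ 2 + t ^ (k - 1)) with hC
  have hS2 : S ^ 2 = Y ^ 2 + t ^ k := Real.sq_sqrt (by positivity)
  have hC2 : C ^ 2 = Y ^ 2 + t ^ (k - 1) := Real.sq_sqrt (by positivity)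
  have hSpos : 0 < S := Real.sqrt_pos.mpr (by positivity)
  have hCnn : 0 ≤ C := Real.sqrt_nonneg _
  have htk : t ^ (k - 2) < 1 := pow_lt_one₀ ht0.le ht1 hk2
  have hSY : 0 < S + Y := by positivity
  have h1C : 0 < 1 + C := by linarith
  have h3 : (0 : ℝ) < 1 - t ^ (k - 2) := by linarith
  have h1 : 1 - Y / S = t ^ k / (S * (S + Y)) := by
    rw [eq_div_iff (by positivity)]
    have : (1 - Y / S) * (S * (S + Y)) = (S - Y) * (S + Y) := by
      field_simp
    rw [this]; nlinarith [hS2]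
  have hkey : 1 - C ^ 2 = t * (1 - t ^ (k - 2)) := by
    have h : t ^ (k - 1) = t * t ^ (k - 2) := by
      rw [← pow_succ']; congr 1; omega
    rw [hC2, h, ht]; ring
  have h2 : 1 - C = t * (1 - t ^ (k - 2)) / (1 + C) := by
    rw [eq_div_iff (by positivity), ← hkey]; ring
  rw [h1, h2, div_pow, mul_pow]
  rw [div_eq_div_iff (by positivity) (by positivity)]
  field_simp
end

section
/- Let k ≥ 3 be an integer, define φ(u) = u + (1-u)^{k-1} for u ∈ [0,1], and let u⁺ = 1 - (k-1)^{-1/(k-2)}. Then lim_{v → u⁺} (φ(v) - φ(u⁺)) / (v - u⁺)² = (k-1)(k-2)(1-u⁺)^{k-3} / 2. Consequently, near the critical threshold, |χ² - χ_th²| ∼ |X² - (X⁺)²|², which yields the order-parameter critical exponent β = 1/2 for negativity percolation on the Bethe lattice: |X_SC - X_SC⁺| ∼ |χ - χ_th|^{1/2}. -/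
/-- For an integer `k ≥ 3`, `φ(u) = u + (1-u)^{k-1}`, and the critical point
`u⁺ = 1 - (k-1)^{-1/(k-2)}`:
`lim_{v → u⁺} (φ(v) - φ(u⁺)) / (v - u⁺)² = (k-1)(k-2)(1-u⁺)^{k-3} / 2`.
This quadratic behavior near the minimum yields the order-parameter critical exponent
`β = 1/2` for negativity percolation on the Bethe lattice. -/
theorem stmt_14 (k : ℕ) (hk : 3 ≤ k)
    (φ : ℝ → ℝ) (hφ : ∀ u, φ u = u + (1 - u) ^ (k - 1))
    (uplus : ℝ) (hu : uplus = 1 - ((k : ℝ) - 1) ^ (-(1 : ℝ) / ((k : ℝ) - 2))) :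
    Filter.Tendsto (fun v : ℝ => (φ v - φ uplus) / (v - uplus) ^ 2)
      (nhdsWithin uplus {uplus}ᶜ)
      (nhds (((k : ℝ) - 1) * ((k : ℝ) - 2) * (1 - uplus) ^ (k - 3) / 2)) := by
  have hk3 : (3 : ℝ) ≤ (k : ℝ) := by exact_mod_cast hk
  have hk1 : (0 : ℝ) < (k : ℝ) - 1 := by linarith
  have hk2 : ((k : ℝ) - 2) ≠ 0 := by linarith
  -- key critical identity : (k-1) * (1-uplus)^(k-2) = 1
  have h1u : (1 : ℝ) - uplus = ((k : ℝ) - 1) ^ (-(1 : ℝ) / ((k : ℝ) - 2)) := by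
    rw [hu]; ring
  have hcrit : ((k : ℝ) - 1) * (1 - uplus) ^ (k - 2 : ℕ) = 1 := by
    rw [h1u, ← Real.rpow_natCast (((k : ℝ) - 1) ^ (-(1 : ℝ) / ((k : ℝ) - 2))) (k - 2),
      ← Real.rpow_mul hk1.le]
    have : ((k - 2 : ℕ) : ℝ) = (k : ℝ) - 2 := by
      push_cast [Nat.cast_sub (by omega : 2 ≤ k)]; ring
    rw [this, div_mul_cancel₀ _ hk2, Real.rpow_neg_one]
    field_simp
  -- derivative function
  set f' : ℝ → ℝ := fun v => 1 - ((k : ℝ) - 1) * (1 - v) ^ (k - 2 : ℕ) with hf'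
  have hder : ∀ v : ℝ, HasDerivAt φ (f' v) v := by
    intro v
    have h1 : HasDerivAt (fun v : ℝ => 1 - v) (-1) v := by
      simpa using (hasDerivAt_id v).const_sub 1
    have h2 : HasDerivAt (fun v : ℝ => (1 - v) ^ (k - 1 : ℕ))
        (((k - 1 : ℕ) : ℝ) * (1 - v) ^ (k - 1 - 1 : ℕ) * (-1)) v := h1.pow (k - 1)
    have h3 : HasDerivAt φ (1 + ((k - 1 : ℕ) : ℝ) * (1 - v) ^ (k - 1 - 1 : ℕ) * (-1)) v := by
      have hφe : φ = fun u => u + (1 - u) ^ (k - 1) := funext hφ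
      rw [hφe]
      simpa using (hasDerivAt_id' v).fun_add h2
    convert h3 using 1
    have e1 : ((k - 1 : ℕ) : ℝ) = (k : ℝ) - 1 := by
      push_cast [Nat.cast_sub (by omega : 1 ≤ k)]; ring
    have e2 : k - 1 - 1 = k - 2 := by omega
    rw [hf', e1, e2]; ring
  -- second derivative at uplus
  have hder2 : HasDerivAt f'
      (((k : ℝ) - 1) * ((k : ℝ) - 2) * (1 - uplus) ^ (k - 3 : ℕ)) uplus := by
    have h1 : HasDerivAt (fun v : ℝ => 1 - v) (-1) uplus := by
      simpa using (hasDerivAt_id uplus).const_sub 1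
    have h2 : HasDerivAt (fun v : ℝ => (1 - v) ^ (k - 2 : ℕ))
        (((k - 2 : ℕ) : ℝ) * (1 - uplus) ^ (k - 2 - 1 : ℕ) * (-1)) uplus := h1.pow (k - 2)
    have h3 := (h2.const_mul ((k : ℝ) - 1)).const_sub 1
    refine h3.congr_deriv ?_
    have e1 : ((k - 2 : ℕ) : ℝ) = (k : ℝ) - 2 := by
      push_cast [Nat.cast_sub (by omega : 2 ≤ k)]; ring
    have e2 : k - 2 - 1 = k - 3 := by omega
    rw [e1, e2]; ring
  have hf'u : f' uplus = 0 := by simp [hf', hcrit]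
  -- limit of f' v / (2 * (v - uplus))
  have hslope : Filter.Tendsto (fun v : ℝ => f' v / (2 * (v - uplus)))
      (nhdsWithin uplus {uplus}ᶜ)
      (nhds (((k : ℝ) - 1) * ((k : ℝ) - 2) * (1 - uplus) ^ (k - 3 : ℕ) / 2)) := by
    have h := hasDerivAt_iff_tendsto_slope.mp hder2
    have h2 := h.div_const 2
    refine h2.congr' ?_
    filter_upwards [self_mem_nhdsWithin] with v hv
    have hvne : v - uplus ≠ 0 := sub_ne_zero.mpr hv
    rw [slope_def_field, div_div]
    rw [hf'u, sub_zero]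
    congr 1
    ring
  -- L'Hopital
  have main := HasDerivAt.lhopital_zero_nhdsNE
    (f := fun v : ℝ => φ v - φ uplus) (f' := f')
    (g := fun v : ℝ => (v - uplus) ^ 2) (g' := fun v : ℝ => 2 * (v - uplus))
    (a := uplus)
    (Filter.Eventually.of_forall fun v => by simpa using (hder v).sub_const (φ uplus))
    (Filter.Eventually.of_forall fun v => by
      simpa [mul_comm] using (((hasDerivAt_id v).sub_const uplus).fun_pow 2))
    (by
      filter_upwards [self_mem_nhdsWithin] with v hv
      have : v - uplus ≠ 0 := sub_ne_zero.mpr hv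
      positivity)
    (by
      have : Filter.Tendsto (fun v : ℝ => φ v - φ uplus) (nhds uplus) (nhds 0) := by
        have hc : Continuous φ := by
          have : φ = fun u => u + (1 - u) ^ (k - 1) := funext hφ
          rw [this]; continuity
        simpa using (hc.tendsto uplus).sub_const (φ uplus)
      exact this.mono_left nhdsWithin_le_nhds)
    (by
      have : Filter.Tendsto (fun v : ℝ => (v - uplus) ^ 2) (nhds uplus) (nhds 0) := by
        have hc : Continuous (fun v : ℝ => (v - uplus) ^ 2) := by continuity
        simpa using hc.tendsto uplus
      exact this.mono_left nhdsWithin_le_nhds)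
    hslope
  exact main
end

section
/- For every real W with 0 < W ≤ 1, the cubic equation Y³ - Y² - Y/W + 1 = 0 has exactly one solution Y in the interval [0, W]. -/
/-- For every real `W` with `0 < W ≤ 1`, the cubic equation
`Y³ - Y² - Y/W + 1 = 0` (arising from the Y-Δ star-mesh transform in the
Wheatstone-bridge topology of negativity percolation, with `W = χ⁴`, `Y = ξ²`)
has exactly one solution `Y` in the interval `[0, W]`. -/
theorem stmt_18 (W : ℝ) (hW0 : 0 < W) (hW1 : W ≤ 1) :
    ∃! Y : ℝ, Y ∈ Set.Icc (0 : ℝ) W ∧ Y ^ 3 - Y ^ 2 - Y / W + 1 = 0 := by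
  have hWne : W ≠ 0 := ne_of_gt hW0
  set f : ℝ → ℝ := fun Y => Y ^ 3 - Y ^ 2 - Y / W + 1 with hf
  have hc : ContinuousOn f (Set.Icc 0 W) := by
    apply ContinuousOn.add
    · apply ContinuousOn.sub
      · exact (continuousOn_pow 3).sub (continuousOn_pow 2)
      · exact continuousOn_id.div_const W
    · exact continuousOn_const
  have hfW : f W = W ^ 3 - W ^ 2 := by
    simp only [hf]
    field_simp
    ring
  have hf0 : f 0 = 1 := by simp [hf]
  have hmem : (0 : ℝ) ∈ Set.Icc (f W) (f 0) := by
    constructor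
    · rw [hfW]; nlinarith
    · rw [hf0]; norm_num
  obtain ⟨Y, hY, hfY⟩ := intermediate_value_Icc' (le_of_lt hW0) hc hmem
  refine ⟨Y, ⟨hY, hfY⟩, ?_⟩
  rintro b ⟨⟨hb0, hbW⟩, hfb⟩
  obtain ⟨hY0, hYW⟩ := hY
  -- factor the difference
  have hdiff : (b - Y) * (b ^ 2 + b * Y + Y ^ 2 - b - Y - 1 / W) = 0 := by
    have hfY' : Y ^ 3 - Y ^ 2 - Y / W + 1 = 0 := hfY
    have : (b ^ 3 - b ^ 2 - b / W + 1) - (Y ^ 3 - Y ^ 2 - Y / W + 1) = 0 := by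
      rw [hfb, hfY']; ring
    rw [← this]
    field_simp
    ring
  rcases mul_eq_zero.mp hdiff with h | h
  · linarith
  · -- second factor zero forces b = Y = 1
    have heq : W * (b ^ 2 + b * Y + Y ^ 2 - b - Y) = 1 := by
      field_simp at h
      nlinarith [h]
    have hb1 : b ≤ 1 := le_trans hbW hW1
    have hY1 : Y ≤ 1 := le_trans hYW hW1
    have hab : 1 ≤ b * Y := by
      nlinarith [mul_nonneg (mul_nonneg hb0 hY0) (sub_nonneg.mpr hW1),
        mul_nonneg hW0.le (mul_nonneg hb0 (sub_nonneg.mpr hb1)),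
        mul_nonneg hW0.le (mul_nonneg hY0 (sub_nonneg.mpr hY1))]
    have hbge : 1 ≤ b := by nlinarith
    have hYge : 1 ≤ Y := by nlinarith
    linarith
end
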